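/- Let K ⊂ Γ be compact. Then there exist constants b₀ > 0 and R > 0, depending only on m, f and K, such that for every λ ∈ Γ with max_{1 ≤ i ≤ m} |λ_i| ≥ R and every μ ∈ K with f(λ) ≤ f(μ), one has (max_{1 ≤ i ≤ m} |λ_i|) · ∑_{i=1}^m f_i(λ) ≥ b₀. -/

import Mathlib

open Filter Topology

/-- The `i`-th partial derivative `fᵢ(x) = ∂f/∂λᵢ(x)`. -/
noncomputable def pd {m : ℕ} (f : (Fin m → ℝ) → ℝ) (x : Fin m → ℝ) (i : Fin m) : ℝ :=
  fderiv ℝ f x (Pi.single i 1)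

/-- The Euclidean norm of a vector in `ℝ^m`. -/
noncomputable def eNorm {m : ℕ} (v : Fin m → ℝ) : ℝ :=
  Real.sqrt (∑ i, (v i) ^ 2)

/-- The unit normal `ν_x = Df(x)/|Df(x)|`. -/
noncomputable def nuv {m : ℕ} (f : (Fin m → ℝ) → ℝ) (x : Fin m → ℝ) : Fin m → ℝ :=
  fun i => pd f x i / eNorm (pd f x)

/-!
Write `𝟙` for the all-ones vector. For `μ ∈ Γ` also `μ + 𝟙 ∈ Γ`, and the gradient inequality
of the concave `f` at `μ + 𝟙`, with `fᵢ > 0`, gives `f (μ + 𝟙) > f μ`; by compactness this gap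
is at least some `δ > 0` on `K`. If `f λ ≤ f μ` with `μ ∈ K`, the gradient inequality at `λ` gives
`δ ≤ f (μ + 𝟙) - f λ ≤ ∑ᵢ (μᵢ + 1 - λᵢ) fᵢ(λ) ≤ (C + 1 + max ᵢ|λᵢ|) ∑ᵢ fᵢ(λ)`, where `C`
bounds `K`. Once `max ᵢ|λᵢ| ≥ C + 1` the right side is at most `2 (max ᵢ|λᵢ|) ∑ᵢ fᵢ(λ)`,
so `b₀ = δ / 2` works.
-/
theorem ConcaveOn.le_add_fderiv_sub {E : Type*} [NormedAddCommGroup E] [NormedSpace ℝ E]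
    {s : Set E} {f : E → ℝ} (hf : ConcaveOn ℝ s f) {x y : E} (hx : x ∈ s) (hy : y ∈ s)
    {D : E →L[ℝ] ℝ} (hD : HasFDerivAt f D x) :
    f y ≤ f x + D (y - x) := by
  have hline := hf.comp_affineMap (AffineMap.lineMap x y)
  rw [← AffineMap.lineMap_apply_zero (k := ℝ) x y] at hD
  have h := hline.slope_le_of_hasDerivAt (x := 0) (y := 1) (by simpa) (by simpa) zero_lt_one
    (hD.comp_hasDerivAt 0 AffineMap.hasDerivAt_lineMap)
  simp only [slope, Function.comp_apply, AffineMap.lineMap_apply_one,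
    AffineMap.lineMap_apply_zero, sub_zero, inv_one, one_smul, vsub_eq_sub] at h
  linarith

lemma fderiv_apply_eq_sum_pd {m : ℕ} (f : (Fin m → ℝ) → ℝ) (x v : Fin m → ℝ) :
    fderiv ℝ f x v = ∑ i, v i * pd f x i := by
  conv_lhs => rw [pi_eq_sum_univ' v]
  simp [map_sum, pd]

lemma ConcaveOn.sub_le_mul_sum_pd {m : ℕ} {s : Set (Fin m → ℝ)} {f : (Fin m → ℝ) → ℝ}
    (hf : ConcaveOn ℝ s f) {x y : Fin m → ℝ} (hx : x ∈ s) (hy : y ∈ s)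
    (hfx : DifferentiableAt ℝ f x) (hpd : ∀ i, 0 ≤ pd f x i) {B : ℝ}
    (hB : ∀ i, y i - x i ≤ B) :
    f y - f x ≤ B * ∑ i, pd f x i :=
  calc f y - f x ≤ fderiv ℝ f x (y - x) := by
        linarith [hf.le_add_fderiv_sub hx hy hfx.hasFDerivAt]
    _ = ∑ i, (y i - x i) * pd f x i := fderiv_apply_eq_sum_pd f x (y - x)
    _ ≤ ∑ i, B * pd f x i :=
        Finset.sum_le_sum fun i _ => mul_le_mul_of_nonneg_right (hB i) (hpd i)
    _ = B * ∑ i, pd f x i := (Finset.mul_sum _ _ _).symm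

lemma Convex.add_mem_of_smul_mem {E : Type*} [AddCommGroup E] [Module ℝ E] {s : Set E}
    (hs : Convex ℝ s) (hcone : ∀ t : ℝ, 0 < t → ∀ x ∈ s, t • x ∈ s) {x y : E}
    (hx : x ∈ s) (hy : y ∈ s) : x + y ∈ s := by
  have hmid := hcone 2 two_pos _ (hs hx hy (by norm_num : (0 : ℝ) ≤ 1 / 2)
    (by norm_num : (0 : ℝ) ≤ 1 / 2) (by norm_num))
  rwa [smul_add, smul_smul, smul_smul, show (2 : ℝ) * (1 / 2) = 1 by norm_num, one_smul,
    one_smul] at hmid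

theorem stmt_9_general (m : ℕ) (hm : 2 ≤ m)
    (Γ : Set (Fin m → ℝ)) (f : (Fin m → ℝ) → ℝ)
    (hΓopen : IsOpen Γ)
    (hΓcone : ∀ t : ℝ, 0 < t → ∀ x ∈ Γ, t • x ∈ Γ)
    (hΓpos : {x : Fin m → ℝ | ∀ i, 0 < x i} ⊆ Γ)
    (hfsmooth : ContDiffOn ℝ (⊤ : ℕ∞) f Γ)
    (hf1 : ∀ x ∈ Γ, ∀ i, 0 < pd f x i)
    (hf2 : ConcaveOn ℝ Γ f)
    (K : Set (Fin m → ℝ)) (hK : IsCompact K) (hKΓ : K ⊆ Γ) :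
    ∃ b₀ : ℝ, 0 < b₀ ∧ ∃ R : ℝ, 0 < R ∧
      ∀ lam ∈ Γ, R ≤ (⨆ i, |lam i|) → ∀ μ ∈ K, f lam ≤ f μ →
      (⨆ i, |lam i|) * ∑ i, pd f lam i ≥ b₀ := by
  have : Nonempty (Fin m) := ⟨⟨0, by omega⟩⟩
  have hdiff : ∀ x ∈ Γ, DifferentiableAt ℝ f x := fun x hx =>
    (hfsmooth.differentiableOn (by simp)).differentiableAt (hΓopen.mem_nhds hx)
  have hsum_pos : ∀ x ∈ Γ, 0 < ∑ i, pd f x i := fun x hx =>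
    Finset.sum_pos (fun i _ => hf1 x hx i) Finset.univ_nonempty
  have hshift : ∀ μ ∈ Γ, μ + 1 ∈ Γ := fun μ hμ =>
    hf2.1.add_mem_of_smul_mem hΓcone hμ (hΓpos fun _ => one_pos)
  have hgap : ∀ μ ∈ K, 0 < f (μ + 1) - f μ := fun μ hμ => by
    have hμ1 := hshift μ (hKΓ hμ)
    have hdecr := hf2.sub_le_mul_sum_pd hμ1 (hKΓ hμ) (hdiff _ hμ1) (fun i => (hf1 _ hμ1 i).le)
      (B := -1) (fun i => by simp)
    linarith [hsum_pos _ hμ1]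
  have hgap_cont : ContinuousOn (fun μ => f (μ + 1) - f μ) K :=
    (hfsmooth.continuousOn.comp (continuous_add_const 1).continuousOn
      fun μ hμ => hshift μ (hKΓ hμ)).sub (hfsmooth.continuousOn.mono hKΓ)
  obtain ⟨δ, hδ, hδK⟩ := hK.exists_forall_le' hgap_cont hgap
  obtain ⟨C, hC⟩ := hK.isBounded.exists_norm_le
  refine ⟨δ / 2, half_pos hδ, max C 0 + 1, by positivity, fun lam hlam hR μ hμ hle => ?_⟩
  set M := ⨆ i, |lam i|
  have hbound : ∀ i, (μ + 1) i - lam i ≤ 2 * M := fun i => by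
    have hμi : |μ i| ≤ max C 0 := (norm_le_pi_norm μ i).trans ((hC μ hμ).trans (le_max_left _ _))
    have hlami : |lam i| ≤ M :=
      le_ciSup (f := fun i => |lam i|) (Set.finite_range _).bddAbove i
    simp only [Pi.add_apply, Pi.one_apply]
    linarith [le_abs_self (μ i), neg_abs_le (lam i)]
  have hmain := hf2.sub_le_mul_sum_pd hlam (hshift μ (hKΓ hμ)) (hdiff lam hlam)
    (fun i => (hf1 lam hlam i).le) hbound
  linarith [hδK μ hμ]

/-- from (6.13)/(gs13): for compact `K ⊂ Γ` there are `b₀, R > 0` such that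
for every `λ ∈ Γ` with `max ᵢ|λᵢ| ≥ R` and every `μ ∈ K` with `f(λ) ≤ f(μ)`,
`(max ᵢ|λᵢ|) ∑ᵢ fᵢ(λ) ≥ b₀`. -/
theorem stmt_9 (m : ℕ) (hm : 2 ≤ m)
    (Γ : Set (Fin m → ℝ)) (f : (Fin m → ℝ) → ℝ)
    (hΓopen : IsOpen Γ) (hΓconv : Convex ℝ Γ) (hΓne : Γ.Nonempty)
    (hΓproper : Γ ≠ Set.univ)
    (hΓcone : ∀ t : ℝ, 0 < t → ∀ x ∈ Γ, t • x ∈ Γ)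
    (hΓperm : ∀ π : Equiv.Perm (Fin m), ∀ x ∈ Γ, x ∘ π ∈ Γ)
    (hΓpos : {x : Fin m → ℝ | ∀ i, 0 < x i} ⊆ Γ)
    (hfsmooth : ContDiffOn ℝ (⊤ : ℕ∞) f Γ)
    (hfsymm : ∀ π : Equiv.Perm (Fin m), ∀ x ∈ Γ, f (x ∘ π) = f x)
    (hf1 : ∀ x ∈ Γ, ∀ i, 0 < pd f x i)
    (hf2 : ConcaveOn ℝ Γ f)
    (K : Set (Fin m → ℝ)) (hK : IsCompact K) (hKΓ : K ⊆ Γ) :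
    ∃ b₀ : ℝ, 0 < b₀ ∧ ∃ R : ℝ, 0 < R ∧
      ∀ lam ∈ Γ, R ≤ (⨆ i, |lam i|) → ∀ μ ∈ K, f lam ≤ f μ →
      (⨆ i, |lam i|) * ∑ i, pd f lam i ≥ b₀ :=
  stmt_9_general m hm Γ f hΓopen hΓcone hΓpos hfsmooth hf1 hf2 K hK hKΓ
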